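/- Let L ≥ 1 be an integer and 0 < p_odd ≤ p_src < 1 reals. Let ν = (ν_0,…,ν_L) be nonnegative reals with ν_M = 0 for all M < L·p_src, let δ₁ ≥ 0, and let 𝒬 = { Q pmf on {0,…,L} : ∑_M Q(M)ν_M ≥ ∑_M 𝔟_{L,p_src}(M)ν_M + δ₁ } be nonempty. Then inf_{Q ∈ 𝒬} D(Q‖𝔟_{L,p_odd}) ≥ inf_{Q ∈ 𝒬} D(Q‖𝔟_{L,p_src}). -/

import Mathlib

/-!
For a positive pmf `b`, the infimum of `D(·‖b)` over `{Q : V ≤ E_Q[ν]}` is attained at an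
exponential tilt `Q_t ∝ b · exp (t ν)` with `t ≥ 0` and `E_{Q_t}[ν] = V` (or, when `V = max ν`, at
`b` conditioned on `{ν = V}`), while Gibbs' inequality bounds `D(Q‖b)` below by
`t V - log ∑ b exp (t ν)` for every feasible `Q`. The binomial pmf with the smaller parameter
`p_odd` is pointwise smaller than the one with `p_src` above the mean `L p_src`, which is where `ν`
lives, so its partition function `∑ b exp (t ν)` is smaller too: the dual bound for `p_odd` beats
the value reached by the tilt of `𝔟_{L,p_src}`.
-/

open Finset

/-- The binomial pmf with `L` trials and success probability `p`. -/
noncomputable def binomPmf (L : ℕ) (p : ℝ) (M : ℕ) : ℝ :=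
  (Nat.choose L M : ℝ) * p ^ M * (1 - p) ^ (L - M)

/-- The base-2 Kullback–Leibler divergence `D(P‖Q)` (sum over the support of `P`). -/
noncomputable def klDiv {W : Type*} [Fintype W] (P Q : W → ℝ) : ℝ :=
  ∑ w, if 0 < P w then P w * Real.logb 2 (P w / Q w) else 0

section Finite

variable {W : Type*} [Fintype W]

noncomputable def lnKlDiv (P Q : W → ℝ) : ℝ :=
  ∑ w, if 0 < P w then P w * Real.log (P w / Q w) else 0

lemma klDiv_eq_lnKlDiv_div (P Q : W → ℝ) :
    klDiv P Q = lnKlDiv P Q / Real.log 2 := by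
  rw [klDiv, lnKlDiv, Finset.sum_div]
  refine Finset.sum_congr rfl fun w _ => ?_
  split_ifs <;> simp [Real.logb, mul_div_assoc]

noncomputable def tilt (b e : W → ℝ) (w : W) : ℝ :=
  b w * e w / ∑ v, b v * e v

lemma exists_pos_of_sum_eq_one {P : W → ℝ} (hP : ∑ w, P w = 1) : ∃ w, 0 < P w := by
  by_contra! h
  have := Finset.sum_nonpos fun w (_ : w ∈ Finset.univ) => h w
  linarith

lemma sum_mul_pos_of_pos_on_support {P b e : W → ℝ} (hP1 : ∑ w, P w = 1)
    (hb : ∀ w, 0 < b w) (he : ∀ w, 0 ≤ e w) (hPe : ∀ w, 0 < P w → 0 < e w) :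
    0 < ∑ w, b w * e w := by
  obtain ⟨w₀, hw₀⟩ := exists_pos_of_sum_eq_one hP1
  exact Finset.sum_pos' (fun w _ => mul_nonneg (hb w).le (he w))
    ⟨w₀, Finset.mem_univ _, mul_pos (hb w₀) (hPe w₀ hw₀)⟩

/-- Gibbs' inequality in Donsker–Varadhan form. -/
lemma sum_mul_log_sub_log_le_lnKlDiv {P b e : W → ℝ} (hP : ∀ w, 0 ≤ P w)
    (hP1 : ∑ w, P w = 1) (hb : ∀ w, 0 < b w) (he : ∀ w, 0 ≤ e w)
    (hPe : ∀ w, 0 < P w → 0 < e w) :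
    ∑ w, P w * Real.log (e w) - Real.log (∑ w, b w * e w) ≤ lnKlDiv P b := by
  set Z := ∑ w, b w * e w
  have hZ : 0 < Z := sum_mul_pos_of_pos_on_support hP1 hb he hPe
  have hterm : ∀ w, P w - b w * e w / Z ≤
      (if 0 < P w then P w * Real.log (P w / b w) else 0) - P w * Real.log (e w)
        + P w * Real.log Z := by
    intro w
    split_ifs with hw
    · have hew := hPe w hw
      have key := Real.one_sub_inv_le_log_of_pos
        (show 0 < P w * Z / (b w * e w) by have := hb w; positivity)
      rw [Real.log_div (by have := hb w; positivity) (by have := hb w; positivity),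
        Real.log_mul hw.ne' hZ.ne', Real.log_mul (hb w).ne' hew.ne', inv_div] at key
      rw [Real.log_div hw.ne' (hb w).ne']
      have := mul_le_mul_of_nonneg_left key hw.le
      have hb' := hb w
      field_simp at this ⊢
      linarith
    · rw [le_antisymm (not_lt.1 hw) (hP w)]
      have := hb w
      have := he w
      simp only [zero_sub, zero_mul, sub_zero, add_zero, neg_nonpos]
      positivity
  have hsum := Finset.sum_le_sum fun w (_ : w ∈ Finset.univ) => hterm w
  rw [Finset.sum_add_distrib, Finset.sum_sub_distrib, Finset.sum_sub_distrib, ← Finset.sum_mul,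
    ← Finset.sum_div, div_self hZ.ne', hP1, one_mul] at hsum
  rw [lnKlDiv]
  linarith

lemma klDiv_nonneg {P b : W → ℝ} (hP : ∀ w, 0 ≤ P w)
    (hP1 : ∑ w, P w = 1) (hb : ∀ w, 0 < b w) (hb1 : ∑ w, b w = 1) : 0 ≤ klDiv P b := by
  have := sum_mul_log_sub_log_le_lnKlDiv (e := fun _ => 1) hP hP1 hb (fun _ => zero_le_one)
    (fun _ _ => one_pos)
  simp only [Real.log_one, mul_zero, mul_one, Finset.sum_const_zero, hb1, sub_zero] at this
  rw [klDiv_eq_lnKlDiv_div]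
  exact div_nonneg this (Real.log_nonneg one_le_two)

lemma tilt_nonneg {b e : W → ℝ} (hb : ∀ w, 0 ≤ b w) (he : ∀ w, 0 ≤ e w) (w : W) :
    0 ≤ tilt b e w :=
  div_nonneg (mul_nonneg (hb w) (he w)) (Finset.sum_nonneg fun v _ => mul_nonneg (hb v) (he v))

lemma sum_tilt {b e : W → ℝ} (hZ : 0 < ∑ w, b w * e w) : ∑ w, tilt b e w = 1 := by
  simp only [tilt, ← Finset.sum_div, div_self hZ.ne']

lemma sum_tilt_mul {b e : W → ℝ} (f : W → ℝ) :
    ∑ w, tilt b e w * f w = (∑ w, b w * e w * f w) / ∑ w, b w * e w := by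
  simp only [tilt, Finset.sum_div, div_mul_eq_mul_div]

lemma lnKlDiv_tilt {b e : W → ℝ} (hb : ∀ w, 0 < b w) (he : ∀ w, 0 ≤ e w)
    (hZ : 0 < ∑ w, b w * e w) :
    lnKlDiv (tilt b e) b = ∑ w, tilt b e w * Real.log (e w) - Real.log (∑ w, b w * e w) := by
  rw [lnKlDiv, ← mul_one (Real.log _), ← sum_tilt hZ, Finset.mul_sum, ← Finset.sum_sub_distrib]
  refine Finset.sum_congr rfl fun w _ => ?_
  split_ifs with hw
  · have hew : 0 < e w := by
      by_contra! h
      simp [tilt, le_antisymm h (he w)] at hw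
    have : tilt b e w / b w = e w / ∑ v, b v * e v := by
      have := hb w
      simp only [tilt]
      field_simp
    rw [this, Real.log_div hew.ne' hZ.ne']
    ring
  · rw [le_antisymm (not_lt.1 hw) (tilt_nonneg (fun v => (hb v).le) he w)]
    ring

lemma lnKlDiv_tilt_le_lnKlDiv {P b₁ b₂ e : W → ℝ} (hP : ∀ w, 0 ≤ P w) (hP1 : ∑ w, P w = 1)
    (hb₁ : ∀ w, 0 < b₁ w) (hb₂ : ∀ w, 0 < b₂ w) (he : ∀ w, 0 ≤ e w)
    (hPe : ∀ w, 0 < P w → 0 < e w) (hZ : ∑ w, b₂ w * e w ≤ ∑ w, b₁ w * e w)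
    (hlog : ∑ w, tilt b₁ e w * Real.log (e w) ≤ ∑ w, P w * Real.log (e w)) :
    lnKlDiv (tilt b₁ e) b₁ ≤ lnKlDiv P b₂ := by
  have hZ₂ := sum_mul_pos_of_pos_on_support hP1 hb₂ he hPe
  calc lnKlDiv (tilt b₁ e) b₁
      = ∑ w, tilt b₁ e w * Real.log (e w) - Real.log (∑ w, b₁ w * e w) :=
        lnKlDiv_tilt hb₁ he (hZ₂.trans_le hZ)
    _ ≤ ∑ w, P w * Real.log (e w) - Real.log (∑ w, b₂ w * e w) :=
        sub_le_sub hlog (Real.log_le_log hZ₂ hZ)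
    _ ≤ lnKlDiv P b₂ := sum_mul_log_sub_log_le_lnKlDiv hP hP1 hb₂ he hPe

lemma exists_sum_mul_exp_mul_eq_zero {b f : W → ℝ} (hb : ∀ w, 0 < b w) (hb1 : ∑ w, b w = 1)
    (hf : ∀ w, 0 ≤ f w) {V : ℝ} (hV : ∑ w, b w * f w ≤ V) {w₀ : W} (hw₀ : V < f w₀) :
    ∃ t, 0 ≤ t ∧ ∑ w, b w * Real.exp (t * (f w - V)) * (f w - V) = 0 := by
  set F : ℝ → ℝ := fun t => ∑ w, b w * Real.exp (t * (f w - V)) * (f w - V)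
  have hV0 : 0 ≤ V := (Finset.sum_nonneg fun w _ => mul_nonneg (hb w).le (hf w)).trans hV
  have hF0 : F 0 ≤ 0 := by
    have : F 0 = ∑ w, b w * f w - V := by
      simp only [F, zero_mul, Real.exp_zero, mul_one]
      simp only [mul_sub, Finset.sum_sub_distrib, ← Finset.sum_mul, hb1, one_mul]
    linarith
  have hc : 0 < b w₀ * (f w₀ - V) := mul_pos (hb w₀) (by linarith)
  set t₁ := V / (b w₀ * (f w₀ - V) * (f w₀ - V))
  have ht₁ : 0 ≤ t₁ := by positivity
  -- every summand is at least `-b w * V`, and the one at `w₀` alone is at least `V` at `t₁`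
  have hterm : ∀ w, 0 ≤ b w * Real.exp (t₁ * (f w - V)) * (f w - V) + b w * V := by
    intro w
    have := hb w
    have := hf w
    rcases le_or_gt V (f w) with h | h
    · have := Real.exp_pos (t₁ * (f w - V))
      have : 0 ≤ f w - V := by linarith
      positivity
    · have hexp := Real.exp_le_one_iff.2
        (mul_nonpos_of_nonneg_of_nonpos ht₁ (by linarith : f w - V ≤ 0))
      nlinarith [mul_nonneg (mul_nonneg (hb w).le (sub_nonneg.2 hexp)) (by linarith : 0 ≤ V - f w)]
  have hw₀term : V ≤ b w₀ * Real.exp (t₁ * (f w₀ - V)) * (f w₀ - V) := by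
    have := Real.add_one_le_exp (t₁ * (f w₀ - V))
    have key : b w₀ * (f w₀ - V) * (t₁ * (f w₀ - V)) = V := by
      have : f w₀ - V ≠ 0 := by linarith
      have := (hb w₀).ne'
      simp only [t₁]
      field_simp
    nlinarith
  have hF₁ : 0 ≤ F t₁ := by
    have := Finset.single_le_sum (fun w _ => hterm w) (Finset.mem_univ w₀)
    rw [Finset.sum_add_distrib, ← Finset.sum_mul, hb1, one_mul] at this
    nlinarith [mul_nonneg (hb w₀).le hV0]
  have hcont : Continuous F := by fun_prop
  obtain ⟨t, ht, hFt⟩ := intermediate_value_Icc ht₁ hcont.continuousOn ⟨hF0, hF₁⟩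
  exact ⟨t, ht.1, hFt⟩

lemma exists_lnKlDiv_le_of_lt {P b₁ b₂ f : W → ℝ} (hP : ∀ w, 0 ≤ P w)
    (hP1 : ∑ w, P w = 1) (hb₁ : ∀ w, 0 < b₁ w) (hb₁1 : ∑ w, b₁ w = 1) (hb₂ : ∀ w, 0 < b₂ w)
    (hb₂1 : ∑ w, b₂ w = 1) (hf : ∀ w, 0 ≤ f w) (hb : ∀ w, 0 < f w → b₂ w ≤ b₁ w) {V : ℝ}
    (hV : ∑ w, b₁ w * f w ≤ V) (hPV : V ≤ ∑ w, P w * f w) {w₀ : W} (hw₀ : V < f w₀) :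
    ∃ Q : W → ℝ, ((∀ w, 0 ≤ Q w) ∧ ∑ w, Q w = 1) ∧ V ≤ ∑ w, Q w * f w ∧
      lnKlDiv Q b₁ ≤ lnKlDiv P b₂ := by
  obtain ⟨t, ht, hmean⟩ := exists_sum_mul_exp_mul_eq_zero hb₁ hb₁1 hf hV hw₀
  set e : W → ℝ := fun w => Real.exp (t * (f w - V))
  have he : ∀ w, 0 < e w := fun w => Real.exp_pos _
  have hZ₁ : 0 < ∑ w, b₁ w * e w := sum_mul_pos_of_pos_on_support hb₁1 hb₁ (fun w => (he w).le)
    (fun w _ => he w)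
  have htilt : ∑ w, tilt b₁ e w * (f w - V) = 0 := by
    rw [sum_tilt_mul, hmean, zero_div]
  have hsub : ∀ Q : W → ℝ, ∑ w, Q w * (f w - V) = ∑ w, Q w * f w - (∑ w, Q w) * V := by
    intro Q
    simp only [mul_sub, Finset.sum_sub_distrib, Finset.sum_mul]
  refine ⟨tilt b₁ e, ⟨tilt_nonneg (fun w => (hb₁ w).le) (fun w => (he w).le), sum_tilt hZ₁⟩,
    ?_, lnKlDiv_tilt_le_lnKlDiv hP hP1 hb₁ hb₂ (fun w => (he w).le) (fun w _ => he w) ?_ ?_⟩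
  · rw [hsub, sum_tilt hZ₁, one_mul, sub_eq_zero] at htilt
    exact htilt.ge
  · -- `(b₁ - b₂) (e - e₀) ≥ 0` termwise, where `e₀` is the value of `e` on `{f = 0}`
    have hterm : ∀ w, 0 ≤ (b₁ w - b₂ w) * (e w - Real.exp (t * (0 - V))) := by
      intro w
      rcases (hf w).eq_or_lt with h | h
      · simp [e, ← h]
      · refine mul_nonneg (sub_nonneg.2 (hb w h)) (sub_nonneg.2 ?_)
        exact Real.exp_le_exp.2 (by nlinarith)
    have := Finset.sum_nonneg fun w (_ : w ∈ Finset.univ) => hterm w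
    simp only [sub_mul, mul_sub, Finset.sum_sub_distrib, ← Finset.sum_mul, hb₁1, hb₂1] at this
    linarith
  · have hlog : ∀ Q : W → ℝ, ∑ w, Q w * Real.log (e w) = t * ∑ w, Q w * (f w - V) := by
      intro Q
      simp only [e, Real.log_exp, Finset.mul_sum]
      exact Finset.sum_congr rfl fun w _ => by ring
    rw [hlog, hlog, htilt, hsub, hP1]
    exact mul_le_mul_of_nonneg_left (by linarith) ht

lemma exists_lnKlDiv_le_of_forall_le {P b₁ b₂ f : W → ℝ} (hP : ∀ w, 0 ≤ P w)
    (hP1 : ∑ w, P w = 1) (hb₁ : ∀ w, 0 < b₁ w) (hb₁1 : ∑ w, b₁ w = 1) (hb₂ : ∀ w, 0 < b₂ w)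
    (hb₂1 : ∑ w, b₂ w = 1) (hf : ∀ w, 0 ≤ f w) (hb : ∀ w, 0 < f w → b₂ w ≤ b₁ w) {V : ℝ}
    (hmax : ∀ w, f w ≤ V) (hPV : V ≤ ∑ w, P w * f w) :
    ∃ Q : W → ℝ, ((∀ w, 0 ≤ Q w) ∧ ∑ w, Q w = 1) ∧ V ≤ ∑ w, Q w * f w ∧
      lnKlDiv Q b₁ ≤ lnKlDiv P b₂ := by
  set e : W → ℝ := fun w => if V ≤ f w then 1 else 0
  have he : ∀ w, 0 ≤ e w := fun w => by simp only [e]; split_ifs <;> norm_num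
  have hVf : ∀ w, 0 ≤ P w * (V - f w) := fun w => mul_nonneg (hP w) (sub_nonneg.2 (hmax w))
  have hPf : ∀ w, 0 < P w → V ≤ f w := by
    have hzero : ∑ w, P w * (V - f w) = 0 := by
      refine le_antisymm ?_ (Finset.sum_nonneg fun w _ => hVf w)
      simp only [mul_sub, Finset.sum_sub_distrib, ← Finset.sum_mul, hP1]
      linarith
    intro w hw
    have := (Finset.sum_eq_zero_iff_of_nonneg fun w _ => hVf w).1 hzero w (Finset.mem_univ w)
    linarith [(mul_eq_zero.1 this).resolve_left hw.ne']
  have hPe : ∀ w, 0 < P w → 0 < e w := fun w hw => by simp [e, hPf w hw]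
  have hZ₁ := sum_mul_pos_of_pos_on_support hP1 hb₁ he hPe
  refine ⟨tilt b₁ e, ⟨tilt_nonneg (fun w => (hb₁ w).le) he, sum_tilt hZ₁⟩, ?_,
    lnKlDiv_tilt_le_lnKlDiv hP hP1 hb₁ hb₂ he hPe ?_ ?_⟩
  · have hef : ∀ w, b₁ w * e w * f w = b₁ w * e w * V := by
      intro w
      simp only [e]
      split_ifs with h
      · rw [le_antisymm (hmax w) h]
      · simp
    rw [sum_tilt_mul, Finset.sum_congr rfl fun w _ => hef w, ← Finset.sum_mul,
      mul_div_cancel_left₀ _ hZ₁.ne']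
  · rcases le_or_gt V 0 with hV0 | hV0
    · have : ∀ w, e w = 1 := fun w => if_pos (hV0.trans (hf w))
      simp [this, hb₁1, hb₂1]
    · refine Finset.sum_le_sum fun w _ => ?_
      simp only [e]
      split_ifs with h
      · simpa using hb w (hV0.trans_le h)
      · simp
  · have : ∀ w, Real.log (e w) = 0 := fun w => by simp only [e]; split_ifs <;> simp
    simp [this]

theorem exists_lnKlDiv_le_of_le_on_pos {P b₁ b₂ f : W → ℝ} (hP : ∀ w, 0 ≤ P w)
    (hP1 : ∑ w, P w = 1) (hb₁ : ∀ w, 0 < b₁ w) (hb₁1 : ∑ w, b₁ w = 1) (hb₂ : ∀ w, 0 < b₂ w)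
    (hb₂1 : ∑ w, b₂ w = 1) (hf : ∀ w, 0 ≤ f w) (hb : ∀ w, 0 < f w → b₂ w ≤ b₁ w) {V : ℝ}
    (hV : ∑ w, b₁ w * f w ≤ V) (hPV : V ≤ ∑ w, P w * f w) :
    ∃ Q : W → ℝ, ((∀ w, 0 ≤ Q w) ∧ ∑ w, Q w = 1) ∧ V ≤ ∑ w, Q w * f w ∧
      lnKlDiv Q b₁ ≤ lnKlDiv P b₂ := by
  by_cases hmax : ∃ w₀, V < f w₀
  · obtain ⟨w₀, hw₀⟩ := hmax
    exact exists_lnKlDiv_le_of_lt hP hP1 hb₁ hb₁1 hb₂ hb₂1 hf hb hV hPV hw₀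
  · simp only [not_exists, not_lt] at hmax
    exact exists_lnKlDiv_le_of_forall_le hP hP1 hb₁ hb₁1 hb₂ hb₂1 hf hb hmax hPV

end Finite

lemma binomPmf_pos {L M : ℕ} {p : ℝ} (hp : 0 < p) (hp1 : p < 1) (hM : M ≤ L) :
    0 < binomPmf L p M := by
  have : 0 < 1 - p := by linarith
  have : (0 : ℝ) < L.choose M := by exact_mod_cast Nat.choose_pos hM
  unfold binomPmf
  positivity

lemma sum_range_binomPmf (L : ℕ) (p : ℝ) : ∑ M ∈ Finset.range (L + 1), binomPmf L p M = 1 := by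
  have := (add_pow p (1 - p) L).symm
  rw [add_sub_cancel, one_pow] at this
  rw [← this]
  exact Finset.sum_congr rfl fun M _ => by rw [binomPmf]; ring

/-- Gibbs' inequality for two Bernoulli laws. -/
lemma one_sub_mul_log_div_le_mul_log_div {p q : ℝ} (hp : 0 < p) (hp1 : p < 1) (hq : 0 < q)
    (hq1 : q < 1) : (1 - p) * Real.log ((1 - q) / (1 - p)) ≤ p * Real.log (p / q) := by
  have h1p : 0 < 1 - p := by linarith
  have k₁ := Real.log_le_sub_one_of_pos (div_pos hq hp)
  have k₂ := Real.log_le_sub_one_of_pos (div_pos (by linarith : 0 < 1 - q) h1p)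
  have hlog : Real.log (p / q) = -Real.log (q / p) := by rw [← Real.log_inv, inv_div]
  rw [hlog]
  have e₁ : p * (q / p - 1) = q - p := by field_simp
  have e₂ : (1 - p) * ((1 - q) / (1 - p) - 1) = p - q := by field_simp; ring
  nlinarith [mul_le_mul_of_nonneg_left k₁ hp.le, mul_le_mul_of_nonneg_left k₂ h1p.le]

lemma binomPmf_le_binomPmf {L M : ℕ} {p q : ℝ} (hq : 0 < q) (hqp : q ≤ p) (hp : p < 1)
    (hM : L * p ≤ M) : binomPmf L q M ≤ binomPmf L p M := by
  rcases lt_or_ge L M with hML | hML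
  · simp [binomPmf, Nat.choose_eq_zero_of_lt hML]
  have h0p : 0 < p := hq.trans_le hqp
  have h1q : 0 < 1 - q := by linarith
  have h1p : 0 < 1 - p := by linarith
  set a := Real.log (p / q)
  set b := Real.log ((1 - q) / (1 - p))
  have ha : 0 ≤ a := Real.log_nonneg ((one_le_div hq).2 hqp)
  have hb : 0 ≤ b := Real.log_nonneg ((one_le_div h1p).2 (by linarith))
  have hLM : ((L - M : ℕ) : ℝ) ≤ L * (1 - p) := by
    rw [Nat.cast_sub hML]
    linarith
  have hexp : ((L - M : ℕ) : ℝ) * b ≤ M * a := calc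
    ((L - M : ℕ) : ℝ) * b ≤ L * ((1 - p) * b) := by
      rw [← mul_assoc]; exact mul_le_mul_of_nonneg_right hLM hb
    _ ≤ L * (p * a) :=
      mul_le_mul_of_nonneg_left (one_sub_mul_log_div_le_mul_log_div h0p hp hq (by linarith))
        (Nat.cast_nonneg L)
    _ ≤ M * a := by rw [← mul_assoc]; exact mul_le_mul_of_nonneg_right hM ha
  have hpow : q ^ M * (1 - q) ^ (L - M) ≤ p ^ M * (1 - p) ^ (L - M) := by
    rw [← Real.log_le_log_iff (by positivity) (by positivity), Real.log_mul (by positivity)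
      (by positivity), Real.log_mul (by positivity) (by positivity), Real.log_pow, Real.log_pow,
      Real.log_pow, Real.log_pow]
    have ha' : a = Real.log p - Real.log q := Real.log_div h0p.ne' hq.ne'
    have hb' : b = Real.log (1 - q) - Real.log (1 - p) := Real.log_div h1q.ne' h1p.ne'
    rw [ha', hb'] at hexp
    linarith
  unfold binomPmf
  rw [mul_assoc, mul_assoc]
  exact mul_le_mul_of_nonneg_left hpow (Nat.cast_nonneg _)

theorem stmt_6_general (L : ℕ) (p_odd p_src : ℝ)
    (h1 : 0 < p_odd) (h2 : p_odd ≤ p_src) (h3 : p_src < 1)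
    (ν : Fin (L + 1) → ℝ) (hν0 : ∀ M, 0 ≤ ν M)
    (hνzero : ∀ M : Fin (L + 1), ((M : ℕ) : ℝ) < (L : ℝ) * p_src → ν M = 0)
    (δ₁ : ℝ) (hδ₁ : 0 ≤ δ₁)
    (Q0 : Fin (L + 1) → ℝ)
    (hQ0 : ((∀ M, 0 ≤ Q0 M) ∧ ∑ M, Q0 M = 1) ∧
      ∑ M, Q0 M * ν M ≥ ∑ M : Fin (L + 1), binomPmf L p_src (M : ℕ) * ν M + δ₁) :
    sInf {r : ℝ | ∃ Q : Fin (L + 1) → ℝ, ((∀ M, 0 ≤ Q M) ∧ ∑ M, Q M = 1) ∧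
        (∑ M, Q M * ν M ≥ ∑ M : Fin (L + 1), binomPmf L p_src (M : ℕ) * ν M + δ₁) ∧
        r = klDiv Q (fun M => binomPmf L p_src (M : ℕ))} ≤
      sInf {r : ℝ | ∃ Q : Fin (L + 1) → ℝ, ((∀ M, 0 ≤ Q M) ∧ ∑ M, Q M = 1) ∧
        (∑ M, Q M * ν M ≥ ∑ M : Fin (L + 1), binomPmf L p_src (M : ℕ) * ν M + δ₁) ∧
        r = klDiv Q (fun M => binomPmf L p_odd (M : ℕ))} := by
  have hpos : ∀ p, 0 < p → p < 1 → ∀ M : Fin (L + 1), 0 < binomPmf L p M :=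
    fun p hp hp1 M => binomPmf_pos hp hp1 M.is_le
  have hsum : ∀ p, ∑ M : Fin (L + 1), binomPmf L p M = 1 := fun p =>
    (Fin.sum_univ_eq_sum_range (binomPmf L p) (L + 1)).trans (sum_range_binomPmf L p)
  have hps : 0 < p_src := h1.trans_le h2
  have hdom : ∀ M : Fin (L + 1), 0 < ν M → binomPmf L p_odd M ≤ binomPmf L p_src M :=
    fun M hM => binomPmf_le_binomPmf h1 h2 h3 (not_lt.1 fun h => hM.ne' (hνzero M h))
  refine le_csInf ⟨_, Q0, hQ0.1, hQ0.2, rfl⟩ ?_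
  rintro _ ⟨Q, hQ, hQν, rfl⟩
  obtain ⟨Q', hQ', hQ'ν, hle⟩ := exists_lnKlDiv_le_of_le_on_pos hQ.1 hQ.2 (hpos _ hps h3)
    (hsum _) (hpos _ h1 (h2.trans_lt h3)) (hsum _) hν0 hdom (le_add_of_nonneg_right hδ₁) hQν
  refine csInf_le_of_le ⟨0, ?_⟩ ⟨Q', hQ', hQ'ν, rfl⟩ ?_
  · rintro _ ⟨Q, hQ, -, rfl⟩
    exact klDiv_nonneg hQ.1 hQ.2 (hpos _ hps h3) (hsum _)
  · rw [klDiv_eq_lnKlDiv_div, klDiv_eq_lnKlDiv_div]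
    exact div_le_div_of_nonneg_right hle (Real.log_nonneg one_le_two)

/-- with `0 < p_odd ≤ p_src < 1`, `ν ≥ 0` vanishing below `L·p_src`, `δ₁ ≥ 0`
and the (nonempty) constraint set `𝒬 = {Q : E_Q[ν] ≥ E_{𝔟_{L,p_src}}[ν] + δ₁}`,
one has `inf_{Q∈𝒬} D(Q‖𝔟_{L,p_odd}) ≥ inf_{Q∈𝒬} D(Q‖𝔟_{L,p_src})`. -/
theorem stmt_6 (L : ℕ) (hL : 1 ≤ L) (p_odd p_src : ℝ)
    (h1 : 0 < p_odd) (h2 : p_odd ≤ p_src) (h3 : p_src < 1)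
    (ν : Fin (L + 1) → ℝ) (hν0 : ∀ M, 0 ≤ ν M)
    (hνzero : ∀ M : Fin (L + 1), ((M : ℕ) : ℝ) < (L : ℝ) * p_src → ν M = 0)
    (δ₁ : ℝ) (hδ₁ : 0 ≤ δ₁)
    (Q0 : Fin (L + 1) → ℝ)
    (hQ0 : ((∀ M, 0 ≤ Q0 M) ∧ ∑ M, Q0 M = 1) ∧
      ∑ M, Q0 M * ν M ≥ ∑ M : Fin (L + 1), binomPmf L p_src (M : ℕ) * ν M + δ₁) :
    sInf {r : ℝ | ∃ Q : Fin (L + 1) → ℝ, ((∀ M, 0 ≤ Q M) ∧ ∑ M, Q M = 1) ∧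
        (∑ M, Q M * ν M ≥ ∑ M : Fin (L + 1), binomPmf L p_src (M : ℕ) * ν M + δ₁) ∧
        r = klDiv Q (fun M => binomPmf L p_src (M : ℕ))} ≤
      sInf {r : ℝ | ∃ Q : Fin (L + 1) → ℝ, ((∀ M, 0 ≤ Q M) ∧ ∑ M, Q M = 1) ∧
        (∑ M, Q M * ν M ≥ ∑ M : Fin (L + 1), binomPmf L p_src (M : ℕ) * ν M + δ₁) ∧
        r = klDiv Q (fun M => binomPmf L p_odd (M : ℕ))} :=
  stmt_6_general L p_odd p_src h1 h2 h3 ν hν0 hνzero δ₁ hδ₁ Q0 hQ0
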